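/- Let Γ : I → ℝ³ be a C¹ regular space curve observed by two cameras as in the context, with depths ρᵢ > 0, image curves γᵢ satisfying Γ − cᵢ = ρᵢγᵢ and ⟨e₃ᵢ, γᵢ⟩ = 1, image speeds gᵢ = ‖γᵢ′‖ > 0, and space unit tangent T = Γ′/‖Γ′‖. If T − ⟨e₃₂, T⟩γ₂ ≠ 0, then the ratio of image parametrization speeds at corresponding points is g₁/g₂ = (ρ₂/ρ₁) · ‖T − ⟨e₃₁, T⟩γ₁‖ / ‖T − ⟨e₃₂, T⟩γ₂‖. -/

import Mathlib

/-!
Since `⟪e₃, γ⟫ = 1`, the depth is the affine function `ρ = ⟪e₃, Γ - c⟫`, so `ρ' = ⟪e₃, Γ'⟫`.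
Differentiating `Γ - c = ρ • γ` then gives `ρ • γ' = Γ' - ⟪e₃, Γ'⟫ • γ = G • (T - ⟪e₃, T⟫ • γ)`,
hence `ρᵢ gᵢ = G ‖T - ⟪e₃ᵢ, T⟫ • γᵢ‖` in each view; the factor `G` cancels in the ratio.
-/

open scoped RealInnerProductSpace

noncomputable section

abbrev V3 : Type := EuclideanSpace ℝ (Fin 3)

section PinholeProjection

variable {E : Type*} [NormedAddCommGroup E] [InnerProductSpace ℝ E]
  {c e : E} {Γ γ : ℝ → E} {ρ : ℝ → ℝ}

theorem depth_eq_inner_sub (hproj : ∀ t, Γ t - c = ρ t • γ t) (hplane : ∀ t, ⟪e, γ t⟫ = 1) :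
    ρ = fun t => ⟪e, Γ t - c⟫ := by
  funext t
  rw [hproj t, real_inner_smul_right, hplane t, mul_one]

theorem hasDerivAt_depth (hproj : ∀ t, Γ t - c = ρ t • γ t) (hplane : ∀ t, ⟪e, γ t⟫ = 1)
    {Γ' : E} {s : ℝ} (hΓ : HasDerivAt Γ Γ' s) : HasDerivAt ρ ⟪e, Γ'⟫ s := by
  rw [depth_eq_inner_sub hproj hplane]
  exact (innerSL ℝ e).hasFDerivAt.comp_hasDerivAt s (hΓ.sub_const c)

theorem depth_smul_deriv_image (hproj : ∀ t, Γ t - c = ρ t • γ t)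
    (hplane : ∀ t, ⟪e, γ t⟫ = 1) {Γ' γ' : E} {s : ℝ} (hΓ : HasDerivAt Γ Γ' s)
    (hγ : HasDerivAt γ γ' s) : ρ s • γ' = Γ' - ⟪e, Γ'⟫ • γ s := by
  have hprod : HasDerivAt (fun t => Γ t - c) (ρ s • γ' + ⟪e, Γ'⟫ • γ s) s := by
    rw [funext hproj]
    exact (hasDerivAt_depth hproj hplane hΓ).smul hγ
  exact eq_sub_of_add_eq (hprod.unique (hΓ.sub_const c))

theorem depth_mul_norm_deriv_image (hproj : ∀ t, Γ t - c = ρ t • γ t)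
    (hplane : ∀ t, ⟪e, γ t⟫ = 1) {Γ' γ' T : E} {G s : ℝ} (hΓ : HasDerivAt Γ Γ' s)
    (hγ : HasDerivAt γ γ' s) (hΓT : Γ' = G • T) (hρ : 0 ≤ ρ s) (hG : 0 ≤ G) :
    ρ s * ‖γ'‖ = G * ‖T - ⟪e, T⟫ • γ s‖ := by
  have hvel : ρ s • γ' = G • (T - ⟪e, T⟫ • γ s) := by
    rw [depth_smul_deriv_image hproj hplane hΓ hγ, hΓT, real_inner_smul_right, smul_sub,
      mul_smul]
  simpa only [norm_smul, Real.norm_of_nonneg hρ, Real.norm_of_nonneg hG] using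
    congrArg norm hvel

end PinholeProjection

theorem ratio_of_speeds_two_views
    (c₁ c₂ e₃₁ e₃₂ : V3)
    (Γ Γ' : ℝ → V3)
    (G : ℝ → ℝ) (T : ℝ → V3)
    (ρ₁ ρ₂ : ℝ → ℝ)
    (γ₁ γ₂ γ₁' γ₂' : ℝ → V3)
    (g₁ g₂ : ℝ → ℝ)
    -- Γ is C¹ and regular
    (hΓ' : ∀ s, HasDerivAt Γ (Γ' s) s)
    (hGpos : ∀ s, 0 < G s)
    (hT : ∀ s, T s = (G s)⁻¹ • Γ' s)
    -- projection in each view, both image curves carrying the parameter of Γ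
    (hρ₁pos : ∀ s, 0 < ρ₁ s) (hρ₂pos : ∀ s, 0 < ρ₂ s)
    (hproj₁ : ∀ s, Γ s - c₁ = ρ₁ s • γ₁ s)
    (hproj₂ : ∀ s, Γ s - c₂ = ρ₂ s • γ₂ s)
    (hplane₁ : ∀ s, ⟪e₃₁, γ₁ s⟫ = 1)
    (hplane₂ : ∀ s, ⟪e₃₂, γ₂ s⟫ = 1)
    -- image apparatus
    (hγ₁' : ∀ s, HasDerivAt γ₁ (γ₁' s) s)
    (hγ₂' : ∀ s, HasDerivAt γ₂ (γ₂' s) s)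
    (hg₁ : ∀ s, g₁ s = ‖γ₁' s‖) (hg₂ : ∀ s, g₂ s = ‖γ₂' s‖) :
    ∀ s, T s - ⟪e₃₂, T s⟫ • γ₂ s ≠ 0 →
      g₁ s / g₂ s
        = (ρ₂ s / ρ₁ s)
          * (‖T s - ⟪e₃₁, T s⟫ • γ₁ s‖ / ‖T s - ⟪e₃₂, T s⟫ • γ₂ s‖) := by
  intro s hA₂
  have hG := hGpos s
  have hΓT : Γ' s = G s • T s := by rw [hT s, smul_inv_smul₀ hG.ne']
  have h₁ := depth_mul_norm_deriv_image hproj₁ hplane₁ (hΓ' s) (hγ₁' s) hΓT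
    (hρ₁pos s).le hG.le
  have h₂ := depth_mul_norm_deriv_image hproj₂ hplane₂ (hΓ' s) (hγ₂' s) hΓT
    (hρ₂pos s).le hG.le
  set a₁ := ‖T s - ⟪e₃₁, T s⟫ • γ₁ s‖
  set a₂ := ‖T s - ⟪e₃₂, T s⟫ • γ₂ s‖
  have ha₂ : a₂ ≠ 0 := norm_ne_zero_iff.mpr hA₂
  have hg₁s : g₁ s = G s * a₁ / ρ₁ s := by rw [hg₁, eq_div_iff (hρ₁pos s).ne', mul_comm, h₁]
  have hg₂s : g₂ s = G s * a₂ / ρ₂ s := by rw [hg₂, eq_div_iff (hρ₂pos s).ne', mul_comm, h₂]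
  rw [hg₁s, hg₂s]
  field_simp
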